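/- Let r = r₁|r₂ be a SOIRE over a finite alphabet Σ and let s be any string over Σ. Then r₁|r₂ matches filter(s, α(r₁|r₂)) if and only if at least one of the following holds: (1) filter(s, α(r₁)) = filter(s, α(r₁|r₂)) and r₁ matches filter(s, α(r₁)); (2) filter(s, α(r₂)) = filter(s, α(r₁|r₂)) and r₂ matches filter(s, α(r₂)). -/

import Mathlib

/-- Regular expressions with interleaving, RE(&). -/
inductive RE (α : Type) : Type where
  | sym : α → RE α
  | opt : RE α → RE α
  | star : RE α → RE α
  | plus : RE α → RE α
  | cat : RE α → RE α → RE α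
  | inter : RE α → RE α → RE α
  | alt : RE α → RE α → RE α

/-- `Shuffle s₁ s₂ s` : `s` is a shuffle (interleaving) of `s₁` and `s₂`. -/
inductive Shuffle {α : Type} : List α → List α → List α → Prop where
  | nil : Shuffle [] [] []
  | left {a : α} {s₁ s₂ s : List α} : Shuffle s₁ s₂ s → Shuffle (a :: s₁) s₂ (a :: s)
  | right {a : α} {s₁ s₂ s : List α} : Shuffle s₁ s₂ s → Shuffle s₁ (a :: s₂) (a :: s)

/-- The matching relation `r ⊨ s`. -/
inductive Matches {α : Type} : RE α → List α → Prop where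
  | sym (a : α) : Matches (RE.sym a) [a]
  | optEps (r : RE α) : Matches (RE.opt r) []
  | opt {r : RE α} {s : List α} : Matches r s → Matches (RE.opt r) s
  | starEps (r : RE α) : Matches (RE.star r) []
  | starStep {r : RE α} {s₁ s₂ : List α} : s₂ ≠ [] → Matches (RE.star r) s₁ →
      Matches r s₂ → Matches (RE.star r) (s₁ ++ s₂)
  | plus {r : RE α} {s₁ s₂ : List α} : Matches (RE.star r) s₁ → Matches r s₂ →
      Matches (RE.plus r) (s₁ ++ s₂)
  | cat {r₁ r₂ : RE α} {s₁ s₂ : List α} : Matches r₁ s₁ → Matches r₂ s₂ →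
      Matches (RE.cat r₁ r₂) (s₁ ++ s₂)
  | inter {r₁ r₂ : RE α} {s₁ s₂ s : List α} : Shuffle s₁ s₂ s → Matches r₁ s₁ →
      Matches r₂ s₂ → Matches (RE.inter r₁ r₂) s
  | altLeft {r₁ r₂ : RE α} {s : List α} : Matches r₁ s → Matches (RE.alt r₁ r₂) s
  | altRight {r₁ r₂ : RE α} {s : List α} : Matches r₂ s → Matches (RE.alt r₁ r₂) s

/-- The list of symbol occurrences of a RE(&). -/
def RE.symList {α : Type} : RE α → List α
  | .sym a => [a]
  | .opt r => r.symList
  | .star r => r.symList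
  | .plus r => r.symList
  | .cat r₁ r₂ => r₁.symList ++ r₂.symList
  | .inter r₁ r₂ => r₁.symList ++ r₂.symList
  | .alt r₁ r₂ => r₁.symList ++ r₂.symList

/-- A SOIRE is a RE(&) in which every symbol occurs at most once. -/
def SOIRE {α : Type} (r : RE α) : Prop := r.symList.Nodup

/-- `α(r)` : the set of symbols occurring in `r`. -/
def RE.alpha {α : Type} [DecidableEq α] : RE α → Finset α
  | .sym a => {a}
  | .opt r => r.alpha
  | .star r => r.alpha
  | .plus r => r.alpha
  | .cat r₁ r₂ => r₁.alpha ∪ r₂.alpha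
  | .inter r₁ r₂ => r₁.alpha ∪ r₂.alpha
  | .alt r₁ r₂ => r₁.alpha ∪ r₂.alpha

/-- `filter(s, V)` : the subsequence of `s` of entries lying in `V`. -/
def filt {α : Type} [DecidableEq α] (s : List α) (V : Finset α) : List α :=
  s.filter (fun a => decide (a ∈ V))

theorem Shuffle.perm {α : Type} {s₁ s₂ s : List α} (h : Shuffle s₁ s₂ s) :
    s.Perm (s₁ ++ s₂) := by
  induction h with
  | nil => rfl
  | left _ ih => exact ih.cons _
  | right _ ih => exact (ih.cons _).trans List.perm_middle.symm

theorem Matches.mem_alpha {α : Type} [DecidableEq α] {r : RE α} {s : List α}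
    (h : Matches r s) : ∀ a ∈ s, a ∈ r.alpha := by
  induction h with
  | sym a => simp [RE.alpha]
  | optEps | starEps => simp
  | opt _ ih => exact ih
  | starStep _ _ _ ih₁ ih₂ | plus _ _ ih₁ ih₂ =>
    intro a ha
    rcases List.mem_append.1 ha with h | h
    exacts [ih₁ a h, ih₂ a h]
  | cat _ _ ih₁ ih₂ =>
    intro a ha
    rcases List.mem_append.1 ha with h | h
    exacts [Finset.mem_union_left _ (ih₁ a h), Finset.mem_union_right _ (ih₂ a h)]
  | inter hsh _ _ ih₁ ih₂ =>
    intro a ha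
    rcases List.mem_append.1 (hsh.perm.subset ha) with h | h
    exacts [Finset.mem_union_left _ (ih₁ a h), Finset.mem_union_right _ (ih₂ a h)]
  | altLeft _ ih => exact fun a ha => Finset.mem_union_left _ (ih a ha)
  | altRight _ ih => exact fun a ha => Finset.mem_union_right _ (ih a ha)

theorem filt_eq_of_subset {α : Type} [DecidableEq α] {V W : Finset α} {s : List α}
    (hVW : V ⊆ W) (h : ∀ a ∈ filt s W, a ∈ V) : filt s V = filt s W := by
  refine List.filter_congr fun a ha => ?_
  by_cases haW : a ∈ W
  · have haV : a ∈ V := h a (List.mem_filter.2 ⟨ha, decide_eq_true haW⟩)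
    simp [haV, haW]
  · simp [haW, mt (@hVW a) haW]

theorem filt_eq_of_matches {α : Type} [DecidableEq α] {r : RE α} {W : Finset α}
    {s : List α} (hrW : r.alpha ⊆ W) (h : Matches r (filt s W)) :
    filt s r.alpha = filt s W :=
  filt_eq_of_subset hrW h.mem_alpha

theorem soire_alt_filter_match_general {α : Type} [DecidableEq α] (r₁ r₂ : RE α)
    (s : List α) :
    Matches (RE.alt r₁ r₂) (filt s (RE.alt r₁ r₂).alpha) ↔
      (filt s r₁.alpha = filt s (RE.alt r₁ r₂).alpha ∧ Matches r₁ (filt s r₁.alpha)) ∨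
      (filt s r₂.alpha = filt s (RE.alt r₁ r₂).alpha ∧ Matches r₂ (filt s r₂.alpha)) := by
  constructor
  · intro h
    cases h with
    | altLeft h =>
      have he := filt_eq_of_matches Finset.subset_union_left h
      exact Or.inl ⟨he, he ▸ h⟩
    | altRight h =>
      have he := filt_eq_of_matches Finset.subset_union_right h
      exact Or.inr ⟨he, he ▸ h⟩
  · rintro (⟨he, h⟩ | ⟨he, h⟩)
    · exact .altLeft (he ▸ h)
    · exact .altRight (he ▸ h)

/-- semantics of filter matching for disjunction. -/
theorem soire_alt_filter_match {α : Type} [DecidableEq α] (r₁ r₂ : RE α)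
    (hr : SOIRE (RE.alt r₁ r₂)) (s : List α) :
    Matches (RE.alt r₁ r₂) (filt s (RE.alt r₁ r₂).alpha) ↔
      (filt s r₁.alpha = filt s (RE.alt r₁ r₂).alpha ∧ Matches r₁ (filt s r₁.alpha)) ∨
      (filt s r₂.alpha = filt s (RE.alt r₁ r₂).alpha ∧ Matches r₂ (filt s r₂.alpha)) :=
  soire_alt_filter_match_general r₁ r₂ s
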